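/- Let f and (f_n) be meromorphic functions on ℂ (valued in the Riemann sphere), f non-constant, and f_n → f locally uniformly on ℂ with respect to the spherical metric. If a₀ ∈ ℂ, then there exist N ∈ ℕ and points a_n ∈ ℂ for n ≥ N such that f_n(a_n) = f(a₀) and a_n → a₀ as n → ∞. -/

import Mathlib

/-! Composing with the inversion `z ↦ 1/z`, an isometry of the chordal metric, we may assume
`f a₀ ≠ ∞`. Near `a₀` the function `f` is then holomorphic and bounded, so the spherical
convergence becomes Euclidean uniform convergence of holomorphic functions, and `f - f a₀` has an
isolated zero at `a₀` because a non-constant meromorphic function is nowhere locally constant.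
On a small circle around `a₀` we have `‖f - f a₀‖ ≥ δ > 0`; once `‖f_n - f‖ < δ / 2` on the disc,
the minimum modulus principle forces `f_n - f a₀` to vanish inside it. Picking for each `n` a
solution of `f_n = f a₀` almost as close to `a₀` as possible gives the sequence. -/

open OnePoint

/-- The chordal (spherical) metric on the Riemann sphere `ℂ̂ = ℂ ∪ {∞}`. -/
noncomputable def sphDist : OnePoint ℂ → OnePoint ℂ → ℝ
  | OnePoint.infty, OnePoint.infty => 0
  | OnePoint.infty, OnePoint.some w => 2 / Real.sqrt (1 + ‖w‖ ^ 2)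
  | OnePoint.some z, OnePoint.infty => 2 / Real.sqrt (1 + ‖z‖ ^ 2)
  | OnePoint.some z, OnePoint.some w =>
      2 * ‖z - w‖ /
        (Real.sqrt (1 + ‖z‖ ^ 2) * Real.sqrt (1 + ‖w‖ ^ 2))

/-- The point `a/b ∈ ℂ̂`, with value `∞` when `b = 0`. -/
noncomputable def sphDiv (a b : ℂ) : OnePoint ℂ :=
  if b = 0 then OnePoint.infty else OnePoint.some (a / b)

/-- `f : ℂ → ℂ̂` is meromorphic: near each point it is the quotient of two analytic
functions, not both vanishing there. -/
def SphMeromorphic (f : ℂ → OnePoint ℂ) : Prop :=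
  ∀ z₀ : ℂ, ∃ g h : ℂ → ℂ, AnalyticAt ℂ g z₀ ∧ AnalyticAt ℂ h z₀ ∧
    (g z₀ ≠ 0 ∨ h z₀ ≠ 0) ∧ ∀ᶠ z in nhds z₀, f z = sphDiv (g z) (h z)

open Filter Metric Topology

lemma sphDiv_of_ne_zero (a : ℂ) {b : ℂ} (hb : b ≠ 0) : sphDiv a b = ↑(a / b) := if_neg hb

@[simp] lemma sphDiv_zero_right (a : ℂ) : sphDiv a 0 = ∞ := if_pos rfl

lemma exists_sphDiv_eq (x : OnePoint ℂ) : ∃ p q : ℂ, (p ≠ 0 ∨ q ≠ 0) ∧ sphDiv p q = x := by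
  induction x using OnePoint.rec with
  | infty => exact ⟨1, 0, by simp⟩
  | coe z => exact ⟨z, 1, by simp [sphDiv_of_ne_zero]⟩

lemma sphDiv_eq_sphDiv_iff {a b p q : ℂ} (hab : a ≠ 0 ∨ b ≠ 0) (hpq : p ≠ 0 ∨ q ≠ 0) :
    sphDiv a b = sphDiv p q ↔ a * q = p * b := by
  rcases eq_or_ne b 0 with rfl | hb <;> rcases eq_or_ne q 0 with rfl | hq
  · simp
  · simp [sphDiv_of_ne_zero _ hq, hq, hab.resolve_right (not_not_intro rfl)]
  · simp [sphDiv_of_ne_zero _ hb, hb, hpq.resolve_right (not_not_intro rfl)]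
  · rw [sphDiv_of_ne_zero _ hb, sphDiv_of_ne_zero _ hq, OnePoint.coe_eq_coe, div_eq_div_iff hb hq]

noncomputable def sphInv : OnePoint ℂ → OnePoint ℂ
  | ∞ => (0 : ℂ)
  | (z : ℂ) => sphDiv 1 z

lemma sphInv_sphDiv {a b : ℂ} (hab : a ≠ 0 ∨ b ≠ 0) : sphInv (sphDiv a b) = sphDiv b a := by
  rcases eq_or_ne b 0 with rfl | hb
  · simp [sphInv, sphDiv_of_ne_zero _ (hab.resolve_right (not_not_intro rfl))]
  · rw [sphDiv_of_ne_zero _ hb]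
    exact (sphDiv_eq_sphDiv_iff (Or.inl one_ne_zero) hab.symm).2 (by field_simp)

lemma sphInv_involutive : Function.Involutive sphInv := fun x => by
  obtain ⟨p, q, hpq, rfl⟩ := exists_sphDiv_eq x
  rw [sphInv_sphDiv hpq, sphInv_sphDiv hpq.symm]

lemma sqrt_one_add_norm_div_sq (a : ℂ) {b : ℂ} (hb : b ≠ 0) :
    √(1 + ‖a / b‖ ^ 2) = √(‖a‖ ^ 2 + ‖b‖ ^ 2) / ‖b‖ := by
  have hb' : 0 < ‖b‖ := norm_pos_iff.2 hb
  rw [← Real.sqrt_sq hb'.le, ← Real.sqrt_div' _ (by positivity), Real.sqrt_sq hb'.le, norm_div]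
  congr 1
  field_simp
  ring

lemma sphDist_sphDiv {a b p q : ℂ} (hab : a ≠ 0 ∨ b ≠ 0) (hpq : p ≠ 0 ∨ q ≠ 0) :
    sphDist (sphDiv a b) (sphDiv p q) =
      2 * ‖a * q - p * b‖ / (√(‖a‖ ^ 2 + ‖b‖ ^ 2) * √(‖p‖ ^ 2 + ‖q‖ ^ 2)) := by
  rcases eq_or_ne b 0 with rfl | hb <;> rcases eq_or_ne q 0 with rfl | hq
  · simp [sphDist]
  · have ha := hab.resolve_right (not_not_intro rfl)
    rw [sphDiv_zero_right, sphDiv_of_ne_zero _ hq]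
    simp only [sphDist, sqrt_one_add_norm_div_sq _ hq]
    simp [Real.sqrt_sq (norm_nonneg a)]
    field_simp
  · have hp := hpq.resolve_right (not_not_intro rfl)
    rw [sphDiv_zero_right, sphDiv_of_ne_zero _ hb]
    simp only [sphDist, sqrt_one_add_norm_div_sq _ hb]
    simp [Real.sqrt_sq (norm_nonneg p)]
    field_simp
  · rw [sphDiv_of_ne_zero _ hb, sphDiv_of_ne_zero _ hq]
    simp only [sphDist]
    rw [sqrt_one_add_norm_div_sq _ hb, sqrt_one_add_norm_div_sq _ hq, div_sub_div _ _ hb hq,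
      norm_div, norm_mul]
    field_simp

lemma sphDist_sphInv (x y : OnePoint ℂ) : sphDist (sphInv x) (sphInv y) = sphDist x y := by
  obtain ⟨a, b, hab, rfl⟩ := exists_sphDiv_eq x
  obtain ⟨p, q, hpq, rfl⟩ := exists_sphDiv_eq y
  rw [sphInv_sphDiv hab, sphInv_sphDiv hpq, sphDist_sphDiv hab hpq,
    sphDist_sphDiv hab.symm hpq.symm, ← norm_neg]
  congr 3 <;> ring

lemma sqrt_one_add_sq_le {t : ℝ} (ht : 0 ≤ t) : √(1 + t ^ 2) ≤ 1 + t :=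
  Real.sqrt_le_iff.2 ⟨by positivity, by nlinarith⟩

lemma exists_coe_eq_of_sphDist_lt {x : OnePoint ℂ} {b : ℂ} {M ε : ℝ} (hb : ‖b‖ ≤ M)
    (hε : ε * (1 + M) ≤ 1) (h : sphDist x b < ε) : ∃ a : ℂ, x = a ∧ ‖a - b‖ < ε * (1 + M) ^ 2 := by
  have hsb : √(1 + ‖b‖ ^ 2) ≤ 1 + M := (sqrt_one_add_sq_le (norm_nonneg b)).trans (by linarith)
  have hsb₀ : 0 < √(1 + ‖b‖ ^ 2) := by positivity
  induction x using OnePoint.rec with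
  | infty =>
    simp only [sphDist] at h
    rw [div_lt_iff₀ hsb₀] at h
    nlinarith [(norm_nonneg b).trans hb]
  | coe a =>
    refine ⟨a, rfl, ?_⟩
    have hε₀ : 0 ≤ ε := le_trans (by simp only [sphDist]; positivity) h.le
    simp only [sphDist] at h
    rw [div_lt_iff₀ (by positivity)] at h
    have hsa : √(1 + ‖a‖ ^ 2) ≤ 1 + M + ‖a - b‖ :=
      (sqrt_one_add_sq_le (norm_nonneg a)).trans (by linarith [norm_le_norm_add_norm_sub' a b])
    have hM : 0 ≤ M := (norm_nonneg b).trans hb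
    -- with `t = ‖a - b‖`: `2 t < ε (1 + M + t) (1 + M) ≤ ε (1 + M) ^ 2 + t`
    nlinarith [mul_le_mul hsa hsb hsb₀.le (by positivity), norm_nonneg (a - b)]

lemma eventually_ne_zero_or_ne_zero {X : Type*} [TopologicalSpace X] {g h : X → ℂ} {x₀ : X}
    (hg : ContinuousAt g x₀) (hh : ContinuousAt h x₀) (hne : g x₀ ≠ 0 ∨ h x₀ ≠ 0) :
    ∀ᶠ x in 𝓝 x₀, g x ≠ 0 ∨ h x ≠ 0 := by
  have hne' : (g x₀, h x₀) ≠ (0, 0) := by simpa only [ne_eq, Prod.mk.injEq, not_and_or] using hne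
  exact ((hg.prodMk hh).eventually_ne hne').mono fun x hx => by
    simpa only [ne_eq, Prod.mk.injEq, not_and_or] using hx

/-- The junk value at `∞` is `0`. -/
def finitePart : OnePoint ℂ → ℂ
  | ∞ => 0
  | (z : ℂ) => z

@[simp] lemma finitePart_coe (z : ℂ) : finitePart z = z := rfl

lemma coe_finitePart {x : OnePoint ℂ} (hx : x ≠ ∞) : (finitePart x : OnePoint ℂ) = x := by
  induction x using OnePoint.rec with
  | infty => exact absurd rfl hx
  | coe z => rfl

namespace SphMeromorphic

variable {f : ℂ → OnePoint ℂ}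

lemma exists_eventually_eq_sphDiv (hf : SphMeromorphic f) (z₀ : ℂ) :
    ∃ g h : ℂ → ℂ, AnalyticAt ℂ g z₀ ∧ AnalyticAt ℂ h z₀ ∧
      ∀ᶠ z in 𝓝 z₀, (g z ≠ 0 ∨ h z ≠ 0) ∧ f z = sphDiv (g z) (h z) := by
  obtain ⟨g, h, hg, hh, hne, hev⟩ := hf z₀
  exact ⟨g, h, hg, hh,
    (eventually_ne_zero_or_ne_zero hg.continuousAt hh.continuousAt hne).and hev⟩

lemma sphInv (hf : SphMeromorphic f) : SphMeromorphic fun z => sphInv (f z) := fun z₀ => by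
  obtain ⟨g, h, hg, hh, hne, hev⟩ := hf z₀
  refine ⟨h, g, hh, hg, hne.symm, ?_⟩
  filter_upwards [hev, eventually_ne_zero_or_ne_zero hg.continuousAt hh.continuousAt hne]
    with z hz hgh
  rw [hz, sphInv_sphDiv hgh]

lemma exists_eventually_eq_coe_div (hf : SphMeromorphic f) {z₀ : ℂ} (hz₀ : f z₀ ≠ ∞) :
    ∃ g h : ℂ → ℂ, AnalyticAt ℂ g z₀ ∧ AnalyticAt ℂ h z₀ ∧ h z₀ ≠ 0 ∧
      ∀ᶠ z in 𝓝 z₀, f z = ↑(g z / h z) := by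
  obtain ⟨g, h, hg, hh, -, hev⟩ := hf z₀
  have hh₀ : h z₀ ≠ 0 := fun h0 => hz₀ (by rw [hev.self_of_nhds, h0, sphDiv_zero_right])
  refine ⟨g, h, hg, hh, hh₀, ?_⟩
  filter_upwards [hev, hh.continuousAt.eventually_ne hh₀] with z hz hhz
  rw [hz, sphDiv_of_ne_zero _ hhz]

lemma eventually_ne_infty (hf : SphMeromorphic f) {z₀ : ℂ} (hz₀ : f z₀ ≠ ∞) :
    ∀ᶠ z in 𝓝 z₀, f z ≠ ∞ := by
  obtain ⟨g, h, -, -, -, hev⟩ := hf.exists_eventually_eq_coe_div hz₀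
  exact hev.mono fun z hz => hz ▸ OnePoint.coe_ne_infty _

lemma analyticAt_finitePart (hf : SphMeromorphic f) {z₀ : ℂ} (hz₀ : f z₀ ≠ ∞) :
    AnalyticAt ℂ (fun z => finitePart (f z)) z₀ := by
  obtain ⟨g, h, hg, hh, hh₀, hev⟩ := hf.exists_eventually_eq_coe_div hz₀
  exact (hg.div hh hh₀).congr (hev.mono fun z hz => by simp [hz])

lemma eventually_eq_of_frequently_eq (hf : SphMeromorphic f) {z₀ : ℂ} {c : OnePoint ℂ}
    (hfreq : ∃ᶠ z in 𝓝[≠] z₀, f z = c) : ∀ᶠ z in 𝓝 z₀, f z = c := by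
  obtain ⟨p, q, hpq, rfl⟩ := exists_sphDiv_eq c
  obtain ⟨g, h, hg, hh, hev⟩ := hf.exists_eventually_eq_sphDiv z₀
  have hiff : ∀ᶠ z in 𝓝 z₀, f z = sphDiv p q ↔ g z * q - p * h z = 0 :=
    hev.mono fun z ⟨hgh, hz⟩ => by rw [hz, sphDiv_eq_sphDiv_iff hgh hpq, sub_eq_zero]
  have hzero : ∀ᶠ z in 𝓝 z₀, g z * q - p * h z = 0 :=
    ((hg.mul analyticAt_const).sub (analyticAt_const.mul hh)).frequently_zero_iff_eventually_zero.1
      ((hfreq.and_eventually (nhdsWithin_le_nhds hiff)).mono fun z hz => hz.2.1 hz.1)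
  filter_upwards [hiff, hzero] with z hz hz0 using hz.2 hz0

lemma eq_of_eventually_eq (hf : SphMeromorphic f) {z₀ : ℂ} {c : OnePoint ℂ}
    (hev : ∀ᶠ z in 𝓝 z₀, f z = c) (z : ℂ) : f z = c := by
  set S := {z | ∀ᶠ w in 𝓝 z, f w = c}
  have hclosed : closure S ∩ Set.univ ⊆ S := fun z ⟨hz, _⟩ => by
    by_contra hzS
    refine hzS (hf.eventually_eq_of_frequently_eq (frequently_nhdsWithin_iff.2 ?_))
    exact (mem_closure_iff_frequently.1 hz).mono fun w hw =>
      ⟨hw.self_of_nhds, fun hwz => hzS (hwz ▸ hw)⟩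
  exact (isPreconnected_univ.subset_of_closure_inter_subset isOpen_setOfPred_eventually_nhds
    ⟨z₀, trivial, hev⟩ hclosed (Set.mem_univ z)).self_of_nhds

end SphMeromorphic

-- Otherwise `(g - w)⁻¹` would be holomorphic on the closed disc and larger at the centre than on
-- its boundary.
theorem DiffContOnCl.exists_mem_closedBall_eq {g : ℂ → ℂ} {c w : ℂ} {ρ : ℝ}
    (hg : DiffContOnCl ℂ g (ball c ρ)) (hρ : 0 < ρ)
    (hsphere : ∀ z ∈ sphere c ρ, ‖g c - w‖ < ‖g z - w‖) : ∃ z ∈ closedBall c ρ, g z = w := by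
  by_contra! hne
  have hinv : DiffContOnCl ℂ (fun z => (g z - w)⁻¹) (ball c ρ) :=
    (hg.sub_const w).inv fun z hz => sub_ne_zero.2 (hne z (closure_ball c hρ.ne' ▸ hz))
  obtain ⟨z, hz, hmax⟩ :=
    Complex.exists_mem_frontier_isMaxOn_norm isBounded_ball ⟨c, mem_ball_self hρ⟩ hinv
  rw [frontier_ball c hρ.ne'] at hz
  have hc : 0 < ‖g c - w‖ := norm_pos_iff.2 (sub_ne_zero.2 (hne c (mem_closedBall_self hρ.le)))
  have hz' : 0 < ‖g z - w‖ := norm_pos_iff.2 (sub_ne_zero.2 (hne z (sphere_subset_closedBall hz)))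
  have hle : ‖(g c - w)⁻¹‖ ≤ ‖(g z - w)⁻¹‖ := hmax (subset_closure (mem_ball_self hρ))
  rw [norm_inv, norm_inv, inv_le_inv₀ hc hz'] at hle
  exact (hsphere z hz).not_ge hle

theorem TendstoUniformlyOn.eventually_exists_dist_lt_eq {G : ℕ → ℂ → ℂ} {g : ℂ → ℂ} {U : Set ℂ}
    {a₀ : ℂ} (hG : TendstoUniformlyOn G g atTop U) (hU : U ∈ 𝓝 a₀)
    (hGd : ∀ᶠ n in atTop, DifferentiableOn ℂ (G n) U) (hg : AnalyticAt ℂ g a₀)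
    (hnc : ¬ ∀ᶠ z in 𝓝 a₀, g z = g a₀) {ε : ℝ} (hε : 0 < ε) :
    ∀ᶠ n in atTop, ∃ z, dist z a₀ < ε ∧ G n z = g a₀ := by
  have hiso : ∀ᶠ z in 𝓝[≠] a₀, g z ≠ g a₀ := by
    simpa only [Pi.sub_apply, ne_eq, sub_eq_zero] using
      (hg.sub (analyticAt_const (v := g a₀))).eventually_eq_zero_or_eventually_ne_zero.resolve_left
        (by simpa only [Pi.sub_apply, sub_eq_zero] using hnc)
  obtain ⟨r, hr, hball⟩ := Metric.eventually_nhds_iff_ball.1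
    ((eventually_nhdsWithin_iff.1 hiso).and (hg.eventually_analyticAt.and hU))
  set ρ := min (ε / 2) (r / 2)
  have hρ : 0 < ρ := by positivity
  have hρr : closedBall a₀ ρ ⊆ ball a₀ r :=
    closedBall_subset_ball ((min_le_right _ _).trans_lt (half_lt_self hr))
  obtain ⟨z₁, hz₁, hmin⟩ := (isCompact_sphere a₀ ρ).exists_isMinOn
    (NormedSpace.sphere_nonempty.2 hρ.le) (f := fun z => ‖g z - g a₀‖)
    fun z hz => ((hball z (hρr (sphere_subset_closedBall hz))).2.1.continuousAt.sub
      continuousAt_const).norm.continuousWithinAt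
  set δ := ‖g z₁ - g a₀‖
  have hδ : 0 < δ := norm_pos_iff.2 <| sub_ne_zero.2 <|
    (hball z₁ (hρr (sphere_subset_closedBall hz₁))).1
      (ne_of_mem_sphere hz₁ hρ.ne' : z₁ ≠ a₀)
  filter_upwards [tendstoUniformlyOn_iff.1 hG (δ / 2) (half_pos hδ), hGd] with n hn hdiff
  have hsub : closedBall a₀ ρ ⊆ U := fun z hz => (hball z (hρr hz)).2.2
  obtain ⟨z, hz, hGz⟩ := (hdiff.diffContOnCl_ball hsub).exists_mem_closedBall_eq hρ fun z hz => by
    have h₁ := hn a₀ (hsub (mem_closedBall_self hρ.le))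
    have h₂ := hn z (hsub (sphere_subset_closedBall hz))
    have h₃ : δ ≤ ‖g z - g a₀‖ := hmin hz
    rw [dist_eq_norm, norm_sub_rev] at h₁
    rw [dist_eq_norm] at h₂
    linarith [norm_sub_le_norm_sub_add_norm_sub (g z) (G n z) (g a₀)]
  exact ⟨z, (mem_closedBall.1 hz).trans_lt ((min_le_left _ _).trans_lt (half_lt_self hε)), hGz⟩

lemma tendstoUniformlyOn_finitePart {F : ℕ → ℂ → OnePoint ℂ} {f : ℂ → OnePoint ℂ} {K : Set ℂ}
    (hK : IsCompact K) (hfK : ∀ z ∈ K, f z ≠ ∞)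
    (hcont : ContinuousOn (fun z => finitePart (f z)) K)
    (hconv : ∀ ε > 0, ∀ᶠ n in atTop, ∀ z ∈ K, sphDist (F n z) (f z) < ε) :
    (∀ᶠ n in atTop, ∀ z ∈ K, F n z ≠ ∞) ∧
      TendstoUniformlyOn (fun n z => finitePart (F n z)) (fun z => finitePart (f z)) atTop K := by
  obtain ⟨M, hM, hbound⟩ := (hK.image_of_continuousOn hcont).isBounded.exists_pos_norm_le
  have hclose : ∀ ε > 0, ∀ᶠ n in atTop, ∀ z ∈ K,
      ∃ a : ℂ, F n z = a ∧ ‖a - finitePart (f z)‖ < ε := by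
    intro ε hε
    set η := min (1 / (1 + M)) (ε / (1 + M) ^ 2)
    filter_upwards [hconv η (by positivity)] with n hn z hz
    have hη : η * (1 + M) ≤ 1 :=
      le_of_le_of_eq (mul_le_mul_of_nonneg_right (min_le_left _ _) (by positivity))
        (by field_simp)
    obtain ⟨a, ha, hlt⟩ := exists_coe_eq_of_sphDist_lt (x := F n z)
      (hbound _ (Set.mem_image_of_mem _ hz)) hη
      (by rw [coe_finitePart (hfK z hz)]; exact hn z hz)
    refine ⟨a, ha, hlt.trans_le ?_⟩
    calc η * (1 + M) ^ 2 ≤ ε / (1 + M) ^ 2 * (1 + M) ^ 2 := by gcongr; exact min_le_right _ _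
      _ = ε := by field_simp
  refine ⟨(hclose 1 one_pos).mono fun n hn z hz => ?_,
    tendstoUniformlyOn_iff.2 fun ε hε => (hclose ε hε).mono fun n hn z hz => ?_⟩
  · obtain ⟨a, ha, -⟩ := hn z hz
    exact ha ▸ OnePoint.coe_ne_infty a
  · obtain ⟨a, ha, hlt⟩ := hn z hz
    rwa [ha, finitePart_coe, dist_comm, dist_eq_norm]

namespace SphMeromorphic

variable {f : ℂ → OnePoint ℂ} {F : ℕ → ℂ → OnePoint ℂ} {a₀ : ℂ} {U : Set ℂ}

theorem eventually_exists_dist_lt_eq_of_ne_infty (hf : SphMeromorphic f)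
    (hF : ∀ n, SphMeromorphic (F n)) (hnc : ∃ u v : ℂ, f u ≠ f v) (hU : U ∈ 𝓝 a₀)
    (hconv : ∀ ε > 0, ∀ᶠ n in atTop, ∀ z ∈ U, sphDist (F n z) (f z) < ε) (hfin : f a₀ ≠ ∞)
    {ε : ℝ} (hε : 0 < ε) : ∀ᶠ n in atTop, ∃ z, dist z a₀ < ε ∧ F n z = f a₀ := by
  obtain ⟨r, hr, hball⟩ := nhds_basis_closedBall.eventually_iff.1
    ((show ∀ᶠ z in 𝓝 a₀, z ∈ U from hU).and (hf.eventually_ne_infty hfin))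
  have hcont : ContinuousOn (fun z => finitePart (f z)) (closedBall a₀ r) := fun z hz =>
    (hf.analyticAt_finitePart (hball hz).2).continuousAt.continuousWithinAt
  obtain ⟨hFfin, hunif⟩ := tendstoUniformlyOn_finitePart (isCompact_closedBall a₀ r)
    (fun z hz => (hball hz).2) hcont fun δ hδ => (hconv δ hδ).mono fun n hn z hz =>
      hn z (hball hz).1
  have hdiff : ∀ᶠ n in atTop, DifferentiableOn ℂ (fun z => finitePart (F n z)) (closedBall a₀ r) :=
    hFfin.mono fun n hn z hz =>
      ((hF n).analyticAt_finitePart (hn z hz)).differentiableAt.differentiableWithinAt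
  have hloc : ¬ ∀ᶠ z in 𝓝 a₀, finitePart (f z) = finitePart (f a₀) := fun h => by
    obtain ⟨u, v, huv⟩ := hnc
    have hev : ∀ᶠ z in 𝓝 a₀, f z = f a₀ := (h.and (hf.eventually_ne_infty hfin)).mono
      fun z ⟨hz, hzi⟩ => by rw [← coe_finitePart hzi, hz, coe_finitePart hfin]
    exact huv ((hf.eq_of_eventually_eq hev u).trans (hf.eq_of_eventually_eq hev v).symm)
  filter_upwards [hunif.eventually_exists_dist_lt_eq (closedBall_mem_nhds a₀ hr) hdiff
    (hf.analyticAt_finitePart hfin) hloc (lt_min hε hr), hFfin] with n ⟨z, hz, hFz⟩ hn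
  refine ⟨z, hz.trans_le (min_le_left _ _), ?_⟩
  rw [← coe_finitePart (hn z (mem_closedBall.2 (hz.le.trans (min_le_right _ _)))), hFz,
    coe_finitePart hfin]

theorem eventually_exists_dist_lt_eq (hf : SphMeromorphic f)
    (hF : ∀ n, SphMeromorphic (F n)) (hnc : ∃ u v : ℂ, f u ≠ f v) (hU : U ∈ 𝓝 a₀)
    (hconv : ∀ ε > 0, ∀ᶠ n in atTop, ∀ z ∈ U, sphDist (F n z) (f z) < ε)
    {ε : ℝ} (hε : 0 < ε) : ∀ᶠ n in atTop, ∃ z, dist z a₀ < ε ∧ F n z = f a₀ := by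
  by_cases hfin : f a₀ = ∞
  · obtain ⟨u, v, huv⟩ := hnc
    have hinv := hf.sphInv.eventually_exists_dist_lt_eq_of_ne_infty (fun n => (hF n).sphInv)
      ⟨u, v, fun h => huv (sphInv_involutive.injective h)⟩ hU
      (by simpa only [sphDist_sphInv] using hconv) (by simp [hfin, _root_.sphInv]) hε
    exact hinv.mono fun n ⟨z, hz, hFz⟩ => ⟨z, hz, sphInv_involutive.injective hFz⟩
  · exact hf.eventually_exists_dist_lt_eq_of_ne_infty hF hnc hU hconv hfin hε

end SphMeromorphic

theorem exists_seq_tendsto_of_eventually_exists {X : Type*} [PseudoMetricSpace X]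
    {P : ℕ → X → Prop} {x₀ : X} (h : ∀ ε > 0, ∀ᶠ n in atTop, ∃ x, dist x x₀ < ε ∧ P n x) :
    ∃ a : ℕ → X, (∀ᶠ n in atTop, P n (a n)) ∧ Tendsto a atTop (𝓝 x₀) := by
  set S : ℕ → Set X := fun n => {x | P n x}
  have hS : ∀ᶠ n in atTop, (S n).Nonempty := (h 1 one_pos).mono fun n ⟨x, _, hx⟩ => ⟨x, hx⟩
  have hinf : Tendsto (fun n => infDist x₀ (S n)) atTop (𝓝 0) :=
    tendsto_order.2 ⟨fun _ hb => Eventually.of_forall fun _ => hb.trans_le infDist_nonneg,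
      fun ε hε => (h ε hε).mono fun _ ⟨_, hx, hPx⟩ =>
        (infDist_le_dist_of_mem hPx).trans_lt (dist_comm x₀ _ ▸ hx)⟩
  have hnear : ∀ n, ∃ x, (S n).Nonempty →
      P n x ∧ dist x₀ x < infDist x₀ (S n) + 1 / ((n : ℝ) + 1) := fun n => by
    by_cases hn : (S n).Nonempty
    · obtain ⟨x, hx, hd⟩ := (infDist_lt_iff hn).1 (lt_add_of_pos_right _ Nat.one_div_pos_of_nat)
      exact ⟨x, fun _ => ⟨hx, hd⟩⟩
    · exact ⟨x₀, fun h => absurd h hn⟩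
  choose a ha using hnear
  refine ⟨a, hS.mono fun n hn => (ha n hn).1, tendsto_iff_dist_tendsto_zero.2 ?_⟩
  refine squeeze_zero' (Eventually.of_forall fun n => dist_nonneg)
    (hS.mono fun n hn => (dist_comm (a n) x₀).trans_le (ha n hn).2.le) ?_
  simpa using hinf.add tendsto_one_div_add_atTop_nhds_zero_nat

/-- Hurwitz-type theorem: if meromorphic functions `f_n : ℂ → ℂ̂` converge locally
uniformly (in the spherical metric) to a non-constant meromorphic function `f`, then for
every `a₀ ∈ ℂ` there are `N ∈ ℕ` and points `a_n → a₀` with `f_n(a_n) = f(a₀)` for all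
`n ≥ N`. -/
theorem stmt18 (f : ℂ → OnePoint ℂ) (F : ℕ → ℂ → OnePoint ℂ)
    (hf : SphMeromorphic f) (hF : ∀ n, SphMeromorphic (F n))
    (hnc : ∃ u v : ℂ, f u ≠ f v)
    (hconv : ∀ z₀ : ℂ, ∃ U ∈ nhds z₀, ∀ ε : ℝ, 0 < ε → ∃ N : ℕ,
      ∀ n ≥ N, ∀ z ∈ U, sphDist (F n z) (f z) < ε)
    (a₀ : ℂ) :
    ∃ (N : ℕ) (a : ℕ → ℂ),
      (∀ n ≥ N, F n (a n) = f a₀) ∧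
      Filter.Tendsto a Filter.atTop (nhds a₀) := by
  obtain ⟨U, hU, hUconv⟩ := hconv a₀
  obtain ⟨a, ha, hlim⟩ := exists_seq_tendsto_of_eventually_exists fun ε hε =>
    hf.eventually_exists_dist_lt_eq hF hnc hU (fun δ hδ => eventually_atTop.2 (hUconv δ hδ)) hε
  obtain ⟨N, hN⟩ := eventually_atTop.1 ha
  exact ⟨N, a, hN, hlim⟩
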